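/- Let K be a complete discrete valuation field of characteristic 0 whose residue field k has characteristic p > 0, let e = v_K(p) and e_0 = e/(p-1). For integers n > 1 and m > e + e_0, the multiplication-by-p map on Milnor K-groups induces a surjective homomorphism p : U^{m-e} k_{q,n-1} → U^m k_{q,n}, where k_{q,n} = K_q^M(K)/p^n and U^m k_{q,n} denotes the image of U^m K_q^M(K) in k_{q,n}. -/

import Mathlib

set_option autoImplicit false

/-! Milnor K-theory: generators and relations. -/

/-- The subgroup of relations (multilinearity and Steinberg) defining the `q`-th
Milnor K-group of a field `K`. -/
def MilnorKRel (K : Type*) [Field K] (q : ℕ) :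
    AddSubgroup (FreeAbelianGroup (Fin q → Kˣ)) :=
  AddSubgroup.closure
    ({x | ∃ (f : Fin q → Kˣ) (i : Fin q) (a b : Kˣ),
        x = FreeAbelianGroup.of (Function.update f i (a * b))
          - FreeAbelianGroup.of (Function.update f i a)
          - FreeAbelianGroup.of (Function.update f i b)} ∪
     {x | ∃ (f : Fin q → Kˣ) (i j : Fin q), i ≠ j ∧ (f i : K) + (f j : K) = 1 ∧
        x = FreeAbelianGroup.of f})

/-- The `q`-th Milnor K-group `K_q^M(K)` of a field `K`. -/
def MilnorK (K : Type*) [Field K] (q : ℕ) : Type _ :=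
  FreeAbelianGroup (Fin q → Kˣ) ⧸ MilnorKRel K q

instance (K : Type*) [Field K] (q : ℕ) : AddCommGroup (MilnorK K q) :=
  QuotientAddGroup.Quotient.addCommGroup _

/-- The Milnor symbol `{f 0, …, f (q-1)}` in `K_q^M(K)`. -/
def MilnorK.symbol (K : Type*) [Field K] (q : ℕ) (f : Fin q → Kˣ) : MilnorK K q :=
  QuotientAddGroup.mk (FreeAbelianGroup.of f)

/-- `U^m K_q^M(K)`: the subgroup of `K_q^M(K)` generated by symbols
`{1 + m_K^m, K^×, …, K^×}` (for `m ≥ 1`). -/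
def UK (O K : Type*) [CommRing O] [IsLocalRing O] [Field K] [Algebra O K] (m q : ℕ) :
    AddSubgroup (MilnorK K q) :=
  AddSubgroup.closure
    {z | ∃ (f : Fin q → Kˣ) (h0 : 0 < q) (a : O),
      a ∈ (IsLocalRing.maximalIdeal O) ^ m ∧
      (f ⟨0, h0⟩ : K) = 1 + algebraMap O K a ∧ z = MilnorK.symbol K q f}

/-- The subgroup `c·A` of an additive group `A`. -/
def pPowSub (A : Type*) [AddCommGroup A] (c : ℕ) : AddSubgroup A :=
  AddSubgroup.closure {x | ∃ y : A, x = c • y}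

/-- `k_{q,n} = K_q^M(K)/p^n` (here `c = p^n`). -/
def kmod (K : Type*) [Field K] (q c : ℕ) : Type _ :=
  MilnorK K q ⧸ pPowSub (MilnorK K q) c

instance (K : Type*) [Field K] (q c : ℕ) : AddCommGroup (kmod K q c) :=
  QuotientAddGroup.Quotient.addCommGroup _

/-- The projection `K_q^M(K) → k_{q,n}`. -/
def kmod.mk (K : Type*) [Field K] (q c : ℕ) : MilnorK K q →+ kmod K q c :=
  QuotientAddGroup.mk' (pPowSub (MilnorK K q) c)

/-- `U^m k_{q,n}`: the image of `U^m K_q^M(K)` in `k_{q,n} = K_q^M(K)/p^n`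
(here `c = p^n`). -/
def Umk (O K : Type*) [CommRing O] [IsLocalRing O] [Field K] [Algebra O K]
    (m q c : ℕ) : AddSubgroup (kmod K q c) :=
  (UK O K m q).map (kmod.mk K q c)

/-- The class in `U^m k_{q,n}` of an element of `U^m K_q^M(K)`. -/
def Umk.of (O K : Type*) [CommRing O] [IsLocalRing O] [Field K] [Algebra O K]
    (m q c : ℕ) (x : MilnorK K q) (hx : x ∈ UK O K m q) : Umk O K m q c :=
  ⟨kmod.mk K q c x, AddSubgroup.mem_map_of_mem _ hx⟩

/-! For `s = m - e`, the `p`-th power map sends `1 + 𝔪^s` onto `1 + 𝔪^m`. Writing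
`u = 1 + ϖ^s t` and `p = c ϖ^e` with `c` a unit, the binomial expansion gives
`u^p = 1 + ϖ^m (c t + ϖ g(t))`: the middle terms are divisible by `p ϖ^(2s)` and the last
one by `ϖ^(ps)`, where `ps > m` is exactly the hypothesis `m > e + e/(p-1)`. So solving
`u^p = 1 + b` amounts to finding a fixed point of a contraction of the complete ring `O`.
As `p • {u, …} = {u^p, …}`, multiplication by `p` then maps the generators of `U^s K_q`
onto those of `U^m K_q`, and it descends to `K_q/p^(n-1) → K_q/p^n`. -/

theorem IsAdicComplete.exists_fixedPoint {R M : Type*} [CommRing R] [AddCommGroup M] [Module R M]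
    {I : Ideal R} [IsAdicComplete I M] (Φ : M → M)
    (hΦ : ∀ n x y, x ≡ y [SMOD (I ^ n • ⊤ : Submodule R M)] →
      Φ x ≡ Φ y [SMOD (I ^ (n + 1) • ⊤ : Submodule R M)]) :
    ∃ x, Φ x = x := by
  set u : ℕ → M := fun k => Φ^[k] 0
  have hmono : ∀ {j k : ℕ}, j ≤ k → (I ^ k • ⊤ : Submodule R M) ≤ I ^ j • ⊤ :=
    fun h => Submodule.smul_mono_left (Ideal.pow_le_pow_right h)
  have hstep : ∀ k, u k ≡ u (k + 1) [SMOD (I ^ k • ⊤ : Submodule R M)] := by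
    intro k
    induction k with
    | zero => simp [SModEq.sub_mem]
    | succ k ih => simpa only [u, Function.iterate_succ_apply'] using hΦ k _ _ ih
  have hcauchy : ∀ {j k : ℕ}, j ≤ k → u j ≡ u k [SMOD (I ^ j • ⊤ : Submodule R M)] := by
    intro j k hjk
    induction k, hjk using Nat.le_induction with
    | base => rfl
    | succ k hjk ih => exact ih.trans ((hstep k).mono (hmono hjk))
  obtain ⟨L, hL⟩ := IsPrecomplete.prec' u hcauchy
  refine ⟨L, sub_eq_zero.mp (IsHausdorff.haus' (I := I) _ fun k => ?_)⟩
  have hΦL : Φ L ≡ u (k + 1) [SMOD (I ^ (k + 1) • ⊤ : Submodule R M)] := by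
    simpa only [u, Function.iterate_succ_apply'] using hΦ k _ _ (hL k).symm
  exact SModEq.zero.mpr
    (SModEq.sub_mem.mp ((hΦL.trans (hL (k + 1))).mono (hmono k.le_succ)))

theorem exists_fixedPoint_of_pow_dvd_sub {R : Type*} [CommRing R] {ϖ : R}
    [IsAdicComplete (Ideal.span {ϖ}) R] (Φ : R → R)
    (hΦ : ∀ n x y, ϖ ^ n ∣ x - y → ϖ ^ (n + 1) ∣ Φ x - Φ y) :
    ∃ x, Φ x = x := by
  refine IsAdicComplete.exists_fixedPoint (I := Ideal.span {ϖ}) Φ fun n x y h => ?_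
  simp only [SModEq.sub_mem, smul_eq_mul, Ideal.mul_top, Ideal.span_singleton_pow,
    Ideal.mem_span_singleton] at h ⊢
  exact hΦ n x y h

section Binomial

variable {R : Type*} [CommRing R] {p e s : ℕ} {ϖ : R}

theorem pow_dvd_add_pow_prime_sub (hp : p.Prime) (hpe : ϖ ^ e ∣ (p : R)) (x : R) {y : R}
    (hy : ϖ ^ s ∣ y) :
    ϖ ^ min (e + 2 * s) (p * s) ∣ (x + y) ^ p - x ^ p - p * x ^ (p - 1) * y := by
  obtain ⟨r, rfl⟩ : ∃ r, p = r + 2 := ⟨p - 2, by have := hp.two_le; omega⟩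
  have hsum : (x + y) ^ (r + 2) - x ^ (r + 2) - ↑(r + 2) * x ^ (r + 2 - 1) * y =
      ∑ k ∈ Finset.range (r + 1), x ^ k * y ^ (r + 2 - k) * ((r + 2).choose k : R) := by
    rw [add_pow, Finset.sum_range_succ, Finset.sum_range_succ, Nat.choose_succ_self_right,
      Nat.choose_self, show r + 2 - (r + 1) = 1 by omega, Nat.sub_self,
      show r + 2 - 1 = r + 1 by omega]
    push_cast
    ring
  rw [hsum]
  refine Finset.dvd_sum fun k hk => ?_
  rcases Nat.eq_zero_or_pos k with rfl | hk0
  · have hyp : ϖ ^ ((r + 2) * s) ∣ y ^ (r + 2) := by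
      rw [mul_comm, pow_mul]
      exact pow_dvd_pow_of_dvd hy _
    exact (pow_dvd_pow ϖ (min_le_right _ _)).trans (by simpa using hyp)
  · have hk : k < r + 1 := Finset.mem_range.mp hk
    have hchoose : ϖ ^ e ∣ ((r + 2).choose k : R) :=
      hpe.trans (Nat.cast_dvd_cast (hp.dvd_choose_self hk0.ne' (by omega)))
    have hy2 : ϖ ^ (2 * s) ∣ y ^ (r + 2 - k) := by
      rw [show r + 2 - k = 2 + (r - k) by omega, pow_add, pow_mul']
      exact (pow_dvd_pow_of_dvd hy 2).mul_right _
    refine (pow_dvd_pow ϖ (min_le_left _ _)).trans ?_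
    rw [pow_add, mul_comm (ϖ ^ e)]
    exact mul_dvd_mul (hy2.mul_left _) hchoose

theorem pow_dvd_one_add_pow_prime_sub_one (hp : p.Prime) (hpe : ϖ ^ e ∣ (p : R)) {a : R}
    (ha : ϖ ^ s ∣ a) (hs : e + s ≤ p * s) : ϖ ^ (e + s) ∣ (1 + a) ^ p - 1 := by
  have hrest := (pow_dvd_pow ϖ (le_min (by omega) hs)).trans
    (pow_dvd_add_pow_prime_sub hp hpe 1 ha)
  have hlin : ϖ ^ (e + s) ∣ (p : R) * 1 ^ (p - 1) * a := by
    rw [pow_add, one_pow, mul_one]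
    exact mul_dvd_mul hpe ha
  simpa using dvd_add hrest hlin

theorem pow_dvd_add_pow_prime_sub_sub (hp : p.Prime) (hpe : ϖ ^ e ∣ (p : R))
    (hs : e + s < p * s) {A Y : R} (n : ℕ) (hA : ϖ ^ s ∣ A - 1) (hY : ϖ ^ (s + n) ∣ Y) :
    ϖ ^ (e + s + n + 1) ∣ (A + Y) ^ p - A ^ p - p * Y := by
  have hs0 : s ≠ 0 := by
    rintro rfl
    simp at hs
  have hquad : ϖ ^ (e + s + n + 1) ∣ (A + Y) ^ p - A ^ p - p * A ^ (p - 1) * Y := by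
    refine (pow_dvd_pow ϖ (le_min (by omega) ?_)).trans (pow_dvd_add_pow_prime_sub hp hpe A hY)
    nlinarith [hp.two_le]
  have hlin : ϖ ^ (e + s + n + 1) ∣ p * Y * (A ^ (p - 1) - 1) := by
    refine (pow_dvd_pow ϖ (by omega : e + s + n + 1 ≤ e + (s + n) + s)).trans ?_
    rw [pow_add, pow_add]
    exact mul_dvd_mul (mul_dvd_mul hpe hY) (hA.trans (sub_one_dvd_pow_sub_one A _))
  convert dvd_add hquad hlin using 1
  ring

end Binomial

theorem exists_one_add_pow_prime_eq {O : Type*} [CommRing O] [IsDomain O] {ϖ : O}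
    [IsAdicComplete (Ideal.span {ϖ}) O] (hϖ : ϖ ≠ 0) {p e s : ℕ} (hp : p.Prime) {c : O}
    (hc : IsUnit c) (hpc : (p : O) = c * ϖ ^ e) (hs : e + s < p * s) {b : O}
    (hb : ϖ ^ (e + s) ∣ b) :
    ∃ a, ϖ ^ s ∣ a ∧ (1 + a) ^ p = 1 + b := by
  have hpe : ϖ ^ e ∣ (p : O) := Dvd.intro_left c hpc.symm
  have hdiv (t : O) : ϖ ^ (e + s) ∣ (1 + ϖ ^ s * t) ^ p - 1 - b :=
    dvd_sub (pow_dvd_one_add_pow_prime_sub_one hp hpe (dvd_mul_right _ _) hs.le) hb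
  choose F hF using hdiv
  have hF_sub (n : ℕ) (x y : O) (hxy : ϖ ^ n ∣ x - y) :
      ϖ ^ (n + 1) ∣ F x - F y - c * (x - y) := by
    have key := pow_dvd_add_pow_prime_sub_sub hp hpe hs n (A := 1 + ϖ ^ s * y)
      (Y := ϖ ^ s * (x - y)) (by simp) (by rw [pow_add]; exact mul_dvd_mul_left _ hxy)
    rw [add_assoc (e + s), pow_add] at key
    refine (mul_dvd_mul_iff_left (pow_ne_zero (e + s) hϖ)).mp ?_
    convert key using 1
    linear_combination hF y - hF x + (ϖ ^ s * (x - y)) * hpc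
  obtain ⟨d, hd⟩ := hc.exists_left_inv
  -- `F` is `c • id` up to a `ϖ`-contracting error, so `t ↦ t - c⁻¹ F t` contracts
  obtain ⟨t, ht⟩ := exists_fixedPoint_of_pow_dvd_sub (ϖ := ϖ) (fun t => t - d * F t)
    fun n x y hxy => by
      obtain ⟨w, hw⟩ := hF_sub n x y hxy
      exact ⟨-d * w, by linear_combination (-d) * hw + (y - x) * hd⟩
  have hFt : F t = 0 := by linear_combination (-c) * ht - F t * hd
  exact ⟨ϖ ^ s * t, dvd_mul_right _ _, by linear_combination hF t + ϖ ^ (e + s) * hFt⟩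

theorem Irreducible.mem_maximalIdeal_pow_iff {O : Type*} [CommRing O] [IsDomain O]
    [IsDiscreteValuationRing O] {ϖ : O} (hϖ : Irreducible ϖ) (j : ℕ) (x : O) :
    x ∈ IsLocalRing.maximalIdeal O ^ j ↔ ϖ ^ j ∣ x := by
  rw [hϖ.maximalIdeal_eq, Ideal.span_singleton_pow, Ideal.mem_span_singleton]

theorem Irreducible.exists_isUnit_mul_pow_eq {O : Type*} [CommRing O] [IsDomain O]
    [IsDiscreteValuationRing O] {ϖ x : O} (hϖ : Irreducible ϖ) {e : ℕ}
    (h₁ : x ∈ IsLocalRing.maximalIdeal O ^ e)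
    (h₂ : x ∉ IsLocalRing.maximalIdeal O ^ (e + 1)) :
    ∃ c, IsUnit c ∧ x = c * ϖ ^ e := by
  rw [hϖ.mem_maximalIdeal_pow_iff] at h₁ h₂
  obtain ⟨c, rfl⟩ := h₁
  refine ⟨c, ?_, mul_comm _ _⟩
  by_contra hc
  have hϖc : ϖ ∣ c := by
    simpa using (hϖ.mem_maximalIdeal_pow_iff 1 c).mp (by simpa using hc)
  exact h₂ (pow_succ ϖ e ▸ mul_dvd_mul_left _ hϖc)

theorem exists_eq_add_lt_mul_of_lt {p e m : ℕ} (hp : 1 < p)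
    (hm : (e : ℚ) + e / (p - 1) < m) : ∃ s, m = e + s ∧ e + s < p * s := by
  have hp' : (0 : ℚ) < p - 1 := by
    have : (1 : ℚ) < p := by exact_mod_cast hp
    linarith
  have hmul : (e : ℚ) * p < m * (p - 1) := by
    rw [add_div' _ _ _ hp'.ne', div_lt_iff₀ hp'] at hm
    linarith
  have hem : e ≤ m := by
    have : (e : ℚ) < m := by nlinarith
    exact_mod_cast this.le
  refine ⟨m - e, by omega, ?_⟩
  rw [Nat.add_sub_cancel' hem]
  qify [hem]
  linarith

namespace MilnorK

variable {K : Type*} [Field K] {q : ℕ}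

theorem symbol_update_mul (f : Fin q → Kˣ) (i : Fin q) (a b : Kˣ) :
    symbol K q (Function.update f i (a * b)) =
      symbol K q (Function.update f i a) + symbol K q (Function.update f i b) := by
  have hrel : FreeAbelianGroup.of (Function.update f i (a * b))
      - FreeAbelianGroup.of (Function.update f i a)
      - FreeAbelianGroup.of (Function.update f i b) ∈ MilnorKRel K q :=
    AddSubgroup.subset_closure (Or.inl ⟨f, i, a, b, rfl⟩)
  rw [← sub_eq_zero, ← sub_sub]
  exact (QuotientAddGroup.eq_zero_iff _).mpr hrel

theorem symbol_update_pow (f : Fin q → Kˣ) (i : Fin q) (u : Kˣ) (N : ℕ) :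
    symbol K q (Function.update f i (u ^ N)) = N • symbol K q (Function.update f i u) := by
  induction N with
  | zero => simpa using symbol_update_mul f i 1 1
  | succ N ih => rw [pow_succ, symbol_update_mul, ih, succ_nsmul]

theorem nsmul_symbol (f : Fin q → Kˣ) (i : Fin q) (N : ℕ) :
    N • symbol K q f = symbol K q (Function.update f i (f i ^ N)) := by
  rw [symbol_update_pow, Function.update_eq_self]

end MilnorK

open IsLocalRing in
theorem UK_map_nsmul {O K : Type*} [CommRing O] [IsLocalRing O] [Field K] [Algebra O K]
    {p s m : ℕ} (q : ℕ) (hp : p ≠ 0)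
    (hpow : ∀ a ∈ maximalIdeal O ^ s, (1 + a) ^ p - 1 ∈ maximalIdeal O ^ m)
    (hroot : ∀ b ∈ maximalIdeal O ^ m, ∃ a ∈ maximalIdeal O ^ s, (1 + a) ^ p = 1 + b) :
    (UK O K s q).map (nsmulAddMonoidHom p) = UK O K m q := by
  rw [UK, UK, AddMonoidHom.map_closure]
  congr 1
  ext z
  constructor
  · rintro ⟨_, ⟨f, h0, a, ha, hf, rfl⟩, rfl⟩
    refine ⟨_, h0, _, hpow a ha, ?_, MilnorK.nsmul_symbol f ⟨0, h0⟩ p⟩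
    simp [hf]
  · rintro ⟨f, h0, b, hb, hf, rfl⟩
    obtain ⟨a, ha, hab⟩ := hroot b hb
    have hv : (1 + algebraMap O K a) ^ p = f ⟨0, h0⟩ := by
      rw [hf, ← map_one (algebraMap O K), ← map_add, ← map_pow, hab, map_add]
    let v := Units.mk0 _ (ne_zero_pow hp (hv ▸ (f ⟨0, h0⟩).ne_zero))
    refine ⟨_, ⟨Function.update f ⟨0, h0⟩ v, h0, a, ha, by simp [v], rfl⟩, ?_⟩
    rw [nsmulAddMonoidHom_apply, MilnorK.nsmul_symbol _ ⟨0, h0⟩, Function.update_self,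
      Function.update_idem, show v ^ p = f ⟨0, h0⟩ from Units.ext (by simpa [v] using hv),
      Function.update_eq_self]

def kmod.nsmulMap (K : Type*) [Field K] (q c c' N : ℕ) (h : c' ∣ N * c) :
    kmod K q c →+ kmod K q c' :=
  QuotientAddGroup.map _ _ (nsmulAddMonoidHom N) <| (AddSubgroup.closure_le _).mpr <| by
    rintro _ ⟨y, rfl⟩
    obtain ⟨k, hk⟩ := h
    exact AddSubgroup.subset_closure
      ⟨k • y, by simp only [nsmulAddMonoidHom_apply, smul_smul, hk]⟩

theorem Umk_map_nsmulMap {O K : Type*} [CommRing O] [IsLocalRing O] [Field K] [Algebra O K]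
    {s m q c c' N : ℕ} (h : c' ∣ N * c)
    (hU : (UK O K s q).map (nsmulAddMonoidHom N) = UK O K m q) :
    (Umk O K s q c).map (kmod.nsmulMap K q c c' N h) = Umk O K m q c' := by
  rw [Umk, Umk, AddSubgroup.map_map, ← hU, AddSubgroup.map_map]
  rfl

theorem milnor_U_mul_p_surjective_general
    (O : Type*) [CommRing O] [IsDomain O] [IsDiscreteValuationRing O]
    [IsAdicComplete (IsLocalRing.maximalIdeal O) O]
    (K : Type*) [Field K] [Algebra O K]
    (p : ℕ) [Fact p.Prime]
    (e : ℕ)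
    (he : (p : O) ∈ (IsLocalRing.maximalIdeal O) ^ e ∧
          (p : O) ∉ (IsLocalRing.maximalIdeal O) ^ (e + 1))
    (q n m : ℕ)
    (hm : (e : ℚ) + (e : ℚ) / ((p : ℚ) - 1) < (m : ℚ)) :
    ∃ φ : Umk O K (m - e) q (p ^ (n - 1)) →+ Umk O K m q (p ^ n),
      Function.Surjective φ ∧
      ∀ (x : MilnorK K q) (hx : x ∈ UK O K (m - e) q),
        ∃ h : kmod.mk K q (p ^ n) (p • x) ∈ Umk O K m q (p ^ n),
          φ (Umk.of O K (m - e) q (p ^ (n - 1)) x hx) = ⟨kmod.mk K q (p ^ n) (p • x), h⟩ := by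
  have hp : p.Prime := Fact.out
  obtain ⟨ϖ, hϖ⟩ := IsDiscreteValuationRing.exists_irreducible O
  have : IsAdicComplete (Ideal.span {ϖ}) O := hϖ.maximalIdeal_eq ▸ ‹_›
  obtain ⟨c, hc, hpc⟩ := hϖ.exists_isUnit_mul_pow_eq he.1 he.2
  obtain ⟨s, rfl, hs⟩ := exists_eq_add_lt_mul_of_lt hp.one_lt hm
  rw [Nat.add_sub_cancel_left]
  have hU : (UK O K s q).map (nsmulAddMonoidHom p) = UK O K (e + s) q := by
    refine UK_map_nsmul q hp.ne_zero (fun a ha => ?_) (fun b hb => ?_)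
    · rw [hϖ.mem_maximalIdeal_pow_iff] at ha ⊢
      exact pow_dvd_one_add_pow_prime_sub_one hp (Dvd.intro_left c hpc.symm) ha hs.le
    · rw [hϖ.mem_maximalIdeal_pow_iff] at hb
      simpa only [hϖ.mem_maximalIdeal_pow_iff] using
        exists_one_add_pow_prime_eq hϖ.ne_zero hp hc hpc hs hb
  have hdvd : p ^ n ∣ p * p ^ (n - 1) := pow_succ' p (n - 1) ▸ pow_dvd_pow p (by omega)
  let ψ := kmod.nsmulMap K q _ _ p hdvd
  let eUmk := AddEquiv.addSubgroupCongr (Umk_map_nsmulMap hdvd hU)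
  exact ⟨eUmk.toAddMonoidHom.comp (ψ.addSubgroupMap _),
    eUmk.surjective.comp (ψ.addSubgroupMap_surjective _), fun x hx => ⟨_, rfl⟩⟩

/-- **Lemma 1 (surjectivity).** Let `K` be a complete discrete valuation field of
characteristic `0` whose residue field has characteristic `p > 0`, `e = v_K(p)`,
`e₀ = e/(p-1)`.  For `n > 1` and `m > e + e₀`, multiplication by `p` induces a
surjective homomorphism `U^{m-e} k_{q,n-1} → U^m k_{q,n}`. -/
theorem milnor_U_mul_p_surjective
    (O : Type*) [CommRing O] [IsDomain O] [IsDiscreteValuationRing O]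
    [IsAdicComplete (IsLocalRing.maximalIdeal O) O]
    (K : Type*) [Field K] [Algebra O K] [IsFractionRing O K] [CharZero K]
    (p : ℕ) [Fact p.Prime] [CharP (IsLocalRing.ResidueField O) p]
    (e : ℕ)
    (he : (p : O) ∈ (IsLocalRing.maximalIdeal O) ^ e ∧
          (p : O) ∉ (IsLocalRing.maximalIdeal O) ^ (e + 1))
    (q n m : ℕ) (hn : 1 < n)
    (hm : (e : ℚ) + (e : ℚ) / ((p : ℚ) - 1) < (m : ℚ)) :
    ∃ φ : Umk O K (m - e) q (p ^ (n - 1)) →+ Umk O K m q (p ^ n),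
      Function.Surjective φ ∧
      ∀ (x : MilnorK K q) (hx : x ∈ UK O K (m - e) q),
        ∃ h : kmod.mk K q (p ^ n) (p • x) ∈ Umk O K m q (p ^ n),
          φ (Umk.of O K (m - e) q (p ^ (n - 1)) x hx) = ⟨kmod.mk K q (p ^ n) (p • x), h⟩ :=
  milnor_U_mul_p_surjective_general O K p e he q n m hm
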